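/- arXiv:1903.04100 — 3 statements merged into one kernel-verified Lean document; each statement's English description precedes it below -/
import Mathlib

section
/- Let f : ℝⁿ → ℝ be twice continuously differentiable, m > 0, γ ≥ 0, h > 0. Define the dissipative leapfrog step Ψ : ℝⁿ × ℝⁿ → ℝⁿ × ℝⁿ by Ψ(x, p) = (X, P) where x̃ = x + (h/(2m)) e^{−γh/2} p, p̃ = e^{−γh/2} p − h ∇f(x̃), X = x̃ + (h/(2m)) p̃, and P = e^{−γh/2} p̃. Then Ψ is conformal symplectic with factor e^{−γh}: for every (x, p) and all ξ, η ∈ ℝⁿ × ℝⁿ, ω(DΨ(x,p) ξ, DΨ(x,p) η) = e^{−γh} ω(ξ, η). -/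
/-!
The step factors as `D ∘ S ∘ K ∘ S ∘ D`, where `D(x, p) = (x, e^{−γh/2} p)` is the damping,
`S(x, p) = (x + (h/(2m)) p, p)` the drift and `K(x, p) = (x, p − h ∇f(x))` the kick. By the chain
rule the conformal factors of the derivatives multiply. The damping scales `ω` by `e^{−γh/2}`;
drift and kick are shears by symmetric operators (the kick's derivative involves the Hessian of
`f`, symmetric by Schwarz's theorem), hence symplectic. The product of the factors is `e^{−γh}`.
-/

open scoped InnerProductSpace

/-- The standard symplectic form on `ℝⁿ × ℝⁿ`: `ω((a,b),(c,d)) = ⟨a,d⟩ − ⟨b,c⟩`. -/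
noncomputable def sympForm {n : ℕ}
    (u v : EuclideanSpace ℝ (Fin n) × EuclideanSpace ℝ (Fin n)) : ℝ :=
  ⟪u.1, v.2⟫_ℝ - ⟪u.2, v.1⟫_ℝ

/-- One step of the dissipative leapfrog integrator for `H(x,p) = ‖p‖²/(2m) + f(x)`
with damping `γ`:
`x̃ = x + (h/(2m)) e^{−γh/2} p`, `p̃ = e^{−γh/2} p − h ∇f(x̃)`,
`X = x̃ + (h/(2m)) p̃`, `P = e^{−γh/2} p̃`. -/
noncomputable def leapfrogStep {n : ℕ} (f : EuclideanSpace ℝ (Fin n) → ℝ) (m γ h : ℝ)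
    (z : EuclideanSpace ℝ (Fin n) × EuclideanSpace ℝ (Fin n)) :
    EuclideanSpace ℝ (Fin n) × EuclideanSpace ℝ (Fin n) :=
  let xt := z.1 + (h / (2 * m)) • (Real.exp (-γ * h / 2) • z.2)
  let pt := Real.exp (-γ * h / 2) • z.2 - h • gradient f xt
  (xt + (h / (2 * m)) • pt, Real.exp (-γ * h / 2) • pt)

open ContinuousLinearMap InnerProductSpace

section Hessian

variable {E : Type*} [NormedAddCommGroup E] [InnerProductSpace ℝ E] [CompleteSpace E]
  {f : E → ℝ} {x : E}

theorem ContDiffAt.hasFDerivAt_gradient (hf : ContDiffAt ℝ 2 f x) :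
    HasFDerivAt (gradient f)
      ((toDual ℝ E).symm.toContinuousLinearEquiv.toContinuousLinearMap ∘L
        fderiv ℝ (fderiv ℝ f) x) x := by
  have hf' : DifferentiableAt ℝ (fderiv ℝ f) x :=
    (hf.fderiv_right (m := 1) (by norm_num)).differentiableAt one_ne_zero
  exact (toDual ℝ E).symm.toContinuousLinearEquiv.toContinuousLinearMap.hasFDerivAt.comp x
    hf'.hasFDerivAt

theorem ContDiffAt.isSymmetric_fderiv_gradient (hf : ContDiffAt ℝ 2 f x) :
    (fderiv ℝ (gradient f) x : E →ₗ[ℝ] E).IsSymmetric := by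
  have hinner (u v : E) : ⟪fderiv ℝ (gradient f) x u, v⟫_ℝ = fderiv ℝ (fderiv ℝ f) x u v := by
    rw [hf.hasFDerivAt_gradient.fderiv]
    exact toDual_symm_apply
  intro u v
  rw [coe_coe, real_inner_comm _ u, hinner, hinner, hf.isSymmSndFDerivAt (by simp) u v]

end Hessian

abbrev PhaseSpace (n : ℕ) := EuclideanSpace ℝ (Fin n) × EuclideanSpace ℝ (Fin n)

variable {n : ℕ}

def IsConformalSymplectic (ν : ℝ) (L : PhaseSpace n →L[ℝ] PhaseSpace n) : Prop :=
  ∀ ξ η, sympForm (L ξ) (L η) = ν * sympForm ξ η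

theorem IsConformalSymplectic.comp {ν μ : ℝ} {L M : PhaseSpace n →L[ℝ] PhaseSpace n}
    (hL : IsConformalSymplectic ν L) (hM : IsConformalSymplectic μ M) :
    IsConformalSymplectic (ν * μ) (L ∘L M) := fun ξ η => by
  rw [comp_apply, comp_apply, hL, hM, mul_assoc]

def damping (c : ℝ) : PhaseSpace n →L[ℝ] PhaseSpace n :=
  (fst ℝ _ _).prod (c • snd ℝ _ _)

def drift (a : ℝ) : PhaseSpace n →L[ℝ] PhaseSpace n :=
  ContinuousLinearMap.prod (fst ℝ _ _ + a • snd ℝ _ _) (snd ℝ _ _)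

def kick (h : ℝ) (g : EuclideanSpace ℝ (Fin n) → EuclideanSpace ℝ (Fin n)) (z : PhaseSpace n) :
    PhaseSpace n :=
  (z.1, z.2 - h • g z.1)

def kickCLM (h : ℝ) (A : EuclideanSpace ℝ (Fin n) →L[ℝ] EuclideanSpace ℝ (Fin n)) :
    PhaseSpace n →L[ℝ] PhaseSpace n :=
  (fst ℝ _ _).prod (snd ℝ _ _ - h • A ∘L fst ℝ _ _)

theorem isConformalSymplectic_damping (c : ℝ) : IsConformalSymplectic c (damping (n := n) c) := by
  intro ξ η
  simp only [sympForm, damping, prod_apply, coe_fst', coe_snd', smul_apply,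
    real_inner_smul_left, real_inner_smul_right]
  ring

theorem isConformalSymplectic_drift (a : ℝ) : IsConformalSymplectic 1 (drift (n := n) a) := by
  intro ξ η
  simp only [sympForm, drift, prod_apply, add_apply, coe_fst', coe_snd', smul_apply,
    inner_add_left, inner_add_right, real_inner_smul_left, real_inner_smul_right]
  ring

theorem isConformalSymplectic_kickCLM (h : ℝ)
    {A : EuclideanSpace ℝ (Fin n) →L[ℝ] EuclideanSpace ℝ (Fin n)}
    (hA : (A : EuclideanSpace ℝ (Fin n) →ₗ[ℝ] EuclideanSpace ℝ (Fin n)).IsSymmetric) :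
    IsConformalSymplectic 1 (kickCLM h A) := by
  intro ξ η
  have hA' : ⟪ξ.1, A η.1⟫_ℝ = ⟪A ξ.1, η.1⟫_ℝ := (hA ξ.1 η.1).symm
  simp only [sympForm, kickCLM, prod_apply, sub_apply, coe_fst', coe_snd',
    smul_apply, comp_apply, inner_sub_left, inner_sub_right, real_inner_smul_left,
    real_inner_smul_right, hA']
  ring

theorem HasFDerivAt.kick {h : ℝ} {g : EuclideanSpace ℝ (Fin n) → EuclideanSpace ℝ (Fin n)}
    {A : EuclideanSpace ℝ (Fin n) →L[ℝ] EuclideanSpace ℝ (Fin n)} {z : PhaseSpace n}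
    (hg : HasFDerivAt g A z.1) : HasFDerivAt (kick h g) (kickCLM h A) z :=
  hasFDerivAt_fst.prodMk (hasFDerivAt_snd.sub ((hg.comp z hasFDerivAt_fst).const_smul h))

theorem leapfrogStep_eq_comp (f : EuclideanSpace ℝ (Fin n) → ℝ) (m γ h : ℝ) :
    leapfrogStep f m γ h =
      damping (Real.exp (-γ * h / 2)) ∘ drift (h / (2 * m)) ∘ kick h (gradient f) ∘
        drift (h / (2 * m)) ∘ damping (Real.exp (-γ * h / 2)) := by
  funext z
  simp [leapfrogStep, damping, drift, kick]

theorem leapfrog_conformal_symplectic_general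
    {n : ℕ} (f : EuclideanSpace ℝ (Fin n) → ℝ) (hf : ContDiff ℝ 2 f)
    (m γ h : ℝ) :
    ∀ (z ξ η : EuclideanSpace ℝ (Fin n) × EuclideanSpace ℝ (Fin n)),
      sympForm (fderiv ℝ (leapfrogStep f m γ h) z ξ) (fderiv ℝ (leapfrogStep f m γ h) z η)
        = Real.exp (-γ * h) * sympForm ξ η := by
  intro z
  set c := Real.exp (-γ * h / 2)
  set a := h / (2 * m)
  set A := fderiv ℝ (gradient f) (drift a (damping c z)).1
  have hkick : HasFDerivAt (kick h (gradient f)) (kickCLM h A) (drift a (damping c z)) :=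
    (hf.contDiffAt.hasFDerivAt_gradient.differentiableAt.hasFDerivAt).kick
  have hstep : HasFDerivAt (leapfrogStep f m γ h)
      (damping c ∘L drift a ∘L kickCLM h A ∘L drift a ∘L damping c) z := by
    rw [leapfrogStep_eq_comp]
    exact (damping c).hasFDerivAt.comp z <| (drift a).hasFDerivAt.comp z <|
      hkick.comp z <| (drift a).hasFDerivAt.comp z (damping c).hasFDerivAt
  have hfactor : Real.exp (-γ * h) = c * (1 * (1 * (1 * c))) := by
    rw [one_mul, one_mul, one_mul, ← Real.exp_add]; ring_nf
  rw [hstep.fderiv, hfactor]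
  exact (isConformalSymplectic_damping c).comp <| (isConformalSymplectic_drift a).comp <|
    (isConformalSymplectic_kickCLM h (hf.contDiffAt.isSymmetric_fderiv_gradient)).comp <|
      (isConformalSymplectic_drift a).comp (isConformalSymplectic_damping c)

/-- the dissipative leapfrog step is conformal symplectic with
factor `e^{−γh}`. -/
theorem leapfrog_conformal_symplectic
    {n : ℕ} (f : EuclideanSpace ℝ (Fin n) → ℝ) (hf : ContDiff ℝ 2 f)
    (m γ h : ℝ) (hm : 0 < m) (hγ : 0 ≤ γ) (hh : 0 < h) :
    ∀ (z ξ η : EuclideanSpace ℝ (Fin n) × EuclideanSpace ℝ (Fin n)),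
      sympForm (fderiv ℝ (leapfrogStep f m γ h) z ξ) (fderiv ℝ (leapfrogStep f m γ h) z η)
        = Real.exp (-γ * h) * sympForm ξ η :=
  leapfrog_conformal_symplectic_general f hf m γ h
end

section
/- Let f : ℝⁿ → ℝ be twice continuously differentiable, m > 0, γ ≥ 0, T > 0, and let (x, p) : [0, T] → ℝⁿ × ℝⁿ be a solution of ẋ = p/m, ṗ = −∇f(x) − γ p. For h > 0 define one Nesterov step from the initial condition: x_{1/2,h} = x(0) + (h/m) e^{−γh} p(0), P_h = e^{−γh} p(0) − h ∇f(x_{1/2,h}), X_h = x(0) + (h/m) P_h. Then Nesterov's method has local error of order h² (i.e., it is an integrator of order 1 for this system): there exist constants C > 0 and ε ∈ (0, T] such that for all h ∈ (0, ε], ‖X_h − x(h)‖ + ‖P_h − p(h)‖ ≤ C h². -/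
/-!
Expand both the exact solution and the Nesterov step to first order at `h = 0`. Since `x'` and
`p'` are differentiable from the right at `0`, the mean value inequality makes the Taylor
remainders `x(h) - x(0) - h x'(0)` and `p(h) - p(0) - h p'(0)` of size `O(h²)`. On the method's
side, `e^{-γh} = 1 - γh + O(h²)` and, `∇f` being differentiable at `x(0)`,
`∇f(x_{1/2,h}) - ∇f(x(0)) = O(h)`. The first-order terms agree, so both errors are `O(h²)`.
-/

open Filter Topology Asymptotics Set

section

variable {E : Type*} [NormedAddCommGroup E] [NormedSpace ℝ E]

theorem DifferentiableWithinAt.isBigO_sub_nhdsGE {u : ℝ → E} {T : ℝ} (hT : 0 < T)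
    (hu : DifferentiableWithinAt ℝ u (Icc 0 T) 0) :
    (fun t => u t - u 0) =O[𝓝[≥] 0] fun t => t := by
  simpa [nhdsWithin_Icc_eq_nhdsGE hT] using hu.isBigO_sub

theorem DifferentiableAt.isBigO_sub_nhdsGE {u : ℝ → E} (hu : DifferentiableAt ℝ u 0) :
    (fun t => u t - u 0) =O[𝓝[≥] 0] fun t => t := by
  simpa using hu.isBigO_sub.mono nhdsWithin_le_nhds

theorem Asymptotics.IsBigO.smul_const {c k : ℝ → ℝ} {l : Filter ℝ} (hc : c =O[l] k) (v : E) :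
    (fun h => c h • v) =O[l] k := by
  simpa using hc.smul (isBigO_const_const v (one_ne_zero (α := ℝ)) l)

theorem isBigO_taylor_remainder_nhdsGE {g g' : ℝ → E} {T : ℝ} (hT : 0 < T)
    (hg : ∀ t ∈ Icc 0 T, HasDerivWithinAt g (g' t) (Icc 0 T) t)
    (hg' : DifferentiableWithinAt ℝ g' (Icc 0 T) 0) :
    (fun h => g h - g 0 - h • g' 0) =O[𝓝[≥] 0] (· ^ 2) := by
  obtain ⟨c, hc0, hc⟩ := (hg'.isBigO_sub_nhdsGE hT).exists_pos
  obtain ⟨δ, hδ, hδc⟩ := mem_nhdsGE_iff_exists_Ico_subset.1 hc.bound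
  refine IsBigO.of_bound c ?_
  filter_upwards [Ico_mem_nhdsGE (lt_min hδ hT)] with h ⟨h0, hh⟩
  have hsub : Icc 0 h ⊆ Icc 0 T := Icc_subset_Icc le_rfl (hh.le.trans (min_le_right _ _))
  have hderiv : ∀ t ∈ Icc 0 h,
      HasDerivWithinAt (fun t => g t - t • g' 0) (g' t - g' 0) (Icc 0 h) t := fun t ht =>
    ((hg t (hsub ht)).mono hsub).sub (by simpa using (hasDerivWithinAt_id t _).smul_const (g' 0))
  have hbound : ∀ t ∈ Icc 0 h, ‖g' t - g' 0‖ ≤ c * h := fun t ht => calc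
    ‖g' t - g' 0‖ ≤ c * ‖t‖ := hδc ⟨ht.1, ht.2.trans_lt (hh.trans_le (min_le_left _ _))⟩
    _ ≤ c * h := by rw [Real.norm_of_nonneg ht.1]; gcongr; exact ht.2
  have hmvt := (convex_Icc 0 h).norm_image_sub_le_of_norm_hasDerivWithin_le hderiv hbound
    (left_mem_Icc.2 h0) (right_mem_Icc.2 h0)
  calc ‖g h - g 0 - h • g' 0‖ = ‖(g h - h • g' 0) - (g 0 - (0 : ℝ) • g' 0)‖ := by
        rw [zero_smul, sub_zero, sub_right_comm]
    _ ≤ c * h * ‖h - 0‖ := hmvt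
    _ = c * ‖h ^ 2‖ := by
        rw [sub_zero, Real.norm_of_nonneg h0, Real.norm_of_nonneg (sq_nonneg h)]; ring

end

theorem exists_pos_forall_Ioc_le_of_isBigO_nhdsGE {E : Type*} [Norm E] {f : ℝ → E} {k : ℝ → ℝ}
    {T : ℝ} (hT : 0 < T) (hf : f =O[𝓝[≥] 0] k) :
    ∃ C > 0, ∃ ε ∈ Ioc 0 T, ∀ h ∈ Ioc 0 ε, ‖f h‖ ≤ C * ‖k h‖ := by
  obtain ⟨C, hC, hCf⟩ := hf.exists_pos
  obtain ⟨δ, hδ, hδf⟩ := mem_nhdsGE_iff_exists_Ico_subset.1 hCf.bound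
  refine ⟨C, hC, min (δ / 2) T, ⟨lt_min (half_pos hδ) hT, min_le_right _ _⟩,
    fun h hh => hδf ⟨hh.1.le, ?_⟩⟩
  linarith [hh.2.trans (min_le_left _ _), mem_Ioi.1 hδ]

theorem Real.exp_neg_mul_sub_one_add_isBigO (γ : ℝ) :
    (fun h => Real.exp (-γ * h) - 1 + γ * h) =O[𝓝 0] (· ^ 2) := by
  have hlim : Tendsto (fun h : ℝ => -γ * h) (𝓝 0) (𝓝 0) := by
    simpa using (continuous_const_mul (-γ)).tendsto 0
  refine (((Real.exp_sub_sum_range_isBigO_pow 2).comp_tendsto hlim).congr_left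
    fun h => ?_).trans ?_
  · simp [Finset.sum_range_succ, sub_add_eq_sub_sub]
  · simpa [Function.comp_def, mul_pow] using isBigO_const_mul_self (γ ^ 2) (· ^ 2 : ℝ → ℝ) (𝓝 0)

theorem ContDiff.differentiable_gradient {F : Type*} [NormedAddCommGroup F]
    [InnerProductSpace ℝ F] [CompleteSpace F] {f : F → ℝ} (hf : ContDiff ℝ 2 f) :
    Differentiable ℝ (gradient f) :=
  (InnerProductSpace.toDual ℝ F).symm.differentiable.comp
    ((hf.fderiv_right (m := 1) (by norm_num)).differentiable one_ne_zero)

noncomputable section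

variable {E : Type*} [NormedAddCommGroup E] [NormedSpace ℝ E]

def nesterovMidpoint (m γ h : ℝ) (y q : E) : E := y + (h / m) • (Real.exp (-γ * h) • q)

def nesterovMomentum (G : E → E) (m γ h : ℝ) (y q : E) : E :=
  Real.exp (-γ * h) • q - h • G (nesterovMidpoint m γ h y q)

def nesterovPosition (G : E → E) (m γ h : ℝ) (y q : E) : E :=
  y + (h / m) • nesterovMomentum G m γ h y q

end

section

variable {E : Type*} [NormedAddCommGroup E] [NormedSpace ℝ E] {G : E → E} {m γ T : ℝ}
  {x p : ℝ → E}

theorem differentiableAt_comp_nesterovMidpoint {y q : E} (hG : DifferentiableAt ℝ G y) :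
    DifferentiableAt ℝ (fun h => G (nesterovMidpoint m γ h y q)) 0 :=
  DifferentiableAt.comp (g := G) 0 (by simpa [nesterovMidpoint] using hG)
    (by unfold nesterovMidpoint; fun_prop)

theorem differentiableAt_nesterovMomentum {y q : E} (hG : DifferentiableAt ℝ G y) :
    DifferentiableAt ℝ (fun h => nesterovMomentum G m γ h y q) 0 :=
  (by fun_prop : DifferentiableAt ℝ (fun h : ℝ => Real.exp (-γ * h) • q) 0).sub
    (differentiableAt_id.smul (differentiableAt_comp_nesterovMidpoint hG))

theorem nesterovMomentum_sub_isBigO (hT : 0 < T)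
    (hx : DifferentiableWithinAt ℝ x (Icc 0 T) 0)
    (hp : ∀ t ∈ Icc 0 T, HasDerivWithinAt p (-G (x t) - γ • p t) (Icc 0 T) t)
    (hG : DifferentiableAt ℝ G (x 0)) :
    (fun h => nesterovMomentum G m γ h (x 0) (p 0) - p h) =O[𝓝[≥] 0] (· ^ 2) := by
  have hexp := ((Real.exp_neg_mul_sub_one_add_isBigO γ).mono
    (nhdsWithin_le_nhds (s := Ici 0))).smul_const (p 0)
  have hmid : (fun h => h • (G (nesterovMidpoint m γ h (x 0) (p 0)) - G (x 0)))
      =O[𝓝[≥] 0] (· ^ 2) := by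
    simpa [sq, nesterovMidpoint] using (isBigO_refl (fun h : ℝ => h) _).smul
      (differentiableAt_comp_nesterovMidpoint (m := m) (γ := γ) (q := p 0) hG).isBigO_sub_nhdsGE
  have htaylor := isBigO_taylor_remainder_nhdsGE hT hp
    ((hG.comp_differentiableWithinAt 0 hx).neg.sub
      ((hp 0 (left_mem_Icc.2 hT.le)).differentiableWithinAt.const_smul γ))
  -- `P_h - p(h) = (e^{-γh} - 1 + γh) p(0) - h (G(x_{1/2,h}) - G(x(0))) - (Taylor remainder of p)`
  refine ((hexp.sub hmid).sub htaylor).congr_left fun h => ?_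
  simp only [nesterovMomentum]
  module

theorem nesterovPosition_sub_isBigO (hT : 0 < T)
    (hx : ∀ t ∈ Icc 0 T, HasDerivWithinAt x ((1 / m) • p t) (Icc 0 T) t)
    (hp : DifferentiableWithinAt ℝ p (Icc 0 T) 0) (hG : DifferentiableAt ℝ G (x 0)) :
    (fun h => nesterovPosition G m γ h (x 0) (p 0) - x h) =O[𝓝[≥] 0] (· ^ 2) := by
  have hstep : (fun h => (m⁻¹ * h) • (nesterovMomentum G m γ h (x 0) (p 0) - p 0))
      =O[𝓝[≥] 0] (· ^ 2) := by
    simpa [sq, nesterovMomentum, nesterovMidpoint] using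
      (isBigO_const_mul_self m⁻¹ (fun h : ℝ => h) _).smul
        (differentiableAt_nesterovMomentum (m := m) (γ := γ) (q := p 0) hG).isBigO_sub_nhdsGE
  have htaylor := isBigO_taylor_remainder_nhdsGE hT hx (hp.const_smul (1 / m))
  -- `X_h - x(h) = (h/m) (P_h - p(0)) - (Taylor remainder of x)`
  refine (hstep.sub htaylor).congr_left fun h => ?_
  simp only [nesterovPosition]
  module

end

theorem nesterov_local_error_order_one_general
    {n : ℕ} (f : EuclideanSpace ℝ (Fin n) → ℝ) (hf : ContDiff ℝ 2 f)
    (m γ T : ℝ) (hT : 0 < T)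
    (x p : ℝ → EuclideanSpace ℝ (Fin n))
    (hx : ∀ t ∈ Set.Icc (0 : ℝ) T,
      HasDerivWithinAt x ((1 / m) • p t) (Set.Icc 0 T) t)
    (hp : ∀ t ∈ Set.Icc (0 : ℝ) T,
      HasDerivWithinAt p (-(gradient f (x t)) - γ • p t) (Set.Icc 0 T) t) :
    ∃ C > 0, ∃ ε ∈ Set.Ioc (0 : ℝ) T, ∀ h ∈ Set.Ioc (0 : ℝ) ε,
      ‖(x 0 + (h / m) • (Real.exp (-γ * h) • p 0
          - h • gradient f (x 0 + (h / m) • (Real.exp (-γ * h) • p 0)))) - x h‖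
        + ‖(Real.exp (-γ * h) • p 0
          - h • gradient f (x 0 + (h / m) • (Real.exp (-γ * h) • p 0))) - p h‖
        ≤ C * h ^ 2 := by
  have h0 : (0 : ℝ) ∈ Icc 0 T := left_mem_Icc.2 hT.le
  have hG := hf.differentiable_gradient (x 0)
  have hposition :=
    nesterovPosition_sub_isBigO (γ := γ) hT hx (hp 0 h0).differentiableWithinAt hG
  have hmomentum :=
    nesterovMomentum_sub_isBigO (m := m) hT (hx 0 h0).differentiableWithinAt hp hG
  obtain ⟨C, hC, ε, hε, hbound⟩ :=
    exists_pos_forall_Ioc_le_of_isBigO_nhdsGE hT (hposition.norm_left.add hmomentum.norm_left)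
  refine ⟨C, hC, ε, hε, fun h hh => ?_⟩
  have hle := hbound h hh
  rwa [Real.norm_of_nonneg (by positivity), Real.norm_of_nonneg (sq_nonneg h)] at hle

/-- Nesterov's method has local error of order `h²` (it is an
integrator of order 1) for the conformal Hamiltonian system
`ẋ = p/m`, `ṗ = −∇f(x) − γp`.  The step from the initial condition is
`x_{1/2} = x(0) + (h/m) e^{−γh} p(0)`, `P = e^{−γh} p(0) − h ∇f(x_{1/2})`,
`X = x(0) + (h/m) P`. -/
theorem nesterov_local_error_order_one
    {n : ℕ} (f : EuclideanSpace ℝ (Fin n) → ℝ) (hf : ContDiff ℝ 2 f)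
    (m γ T : ℝ) (hm : 0 < m) (hγ : 0 ≤ γ) (hT : 0 < T)
    (x p : ℝ → EuclideanSpace ℝ (Fin n))
    (hx : ∀ t ∈ Set.Icc (0 : ℝ) T,
      HasDerivWithinAt x ((1 / m) • p t) (Set.Icc 0 T) t)
    (hp : ∀ t ∈ Set.Icc (0 : ℝ) T,
      HasDerivWithinAt p (-(gradient f (x t)) - γ • p t) (Set.Icc 0 T) t) :
    ∃ C > 0, ∃ ε ∈ Set.Ioc (0 : ℝ) T, ∀ h ∈ Set.Ioc (0 : ℝ) ε,
      ‖(x 0 + (h / m) • (Real.exp (-γ * h) • p 0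
          - h • gradient f (x 0 + (h / m) • (Real.exp (-γ * h) • p 0)))) - x h‖
        + ‖(Real.exp (-γ * h) • p 0
          - h • gradient f (x 0 + (h / m) • (Real.exp (-γ * h) • p 0))) - p h‖
        ≤ C * h ^ 2 :=
  nesterov_local_error_order_one_general f hf m γ T hT x p hx hp
end

section
/- Fix λ > 0, m > 0, h > 0, γ ≥ 0, and set μ = e^{−γh}. Consider the 2 × 2 transition matrices of the heavy-ball and RGD (with c → ∞, α = 1) methods applied to f(x) = (λ/2)x²: T_CM = [[1 − h²λ/m, (h/m) μ], [−hλ, μ]] and T_RGD = [[1 − h²λ/(2m), (h/(2m)) √μ (2 − h²λ/(2m))], [−hλ √μ, μ (1 − h²λ/(2m))]]. Then det T_CM = det T_RGD = μ = e^{−γh}, and consequently every non-real complex eigenvalue of T_CM, and every non-real complex eigenvalue of T_RGD, has modulus exactly √μ = e^{−γh/2}; i.e., both conformal symplectic methods exactly preserve the dissipation rate of the continuous system in their linear spectrum. -/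
/-!
The characteristic polynomial of a real `2 × 2` matrix `A` is `z² - (tr A) z + det A`. A non-real
root `z` has real part `tr A / 2` (compare imaginary parts), and then comparing real parts gives
`|z|² = det A`. So it suffices to compute both determinants: each equals `μ`.
-/

lemma Complex.normSq_eq_of_sq_sub_mul_add_eq_zero {t D : ℝ} {z : ℂ}
    (hz : z ^ 2 - t * z + D = 0) (him : z.im ≠ 0) : Complex.normSq z = D := by
  have him_eq : z.im * (2 * z.re - t) = 0 := by
    have := congrArg Complex.im hz
    simp only [sq, Complex.sub_im, Complex.add_im, Complex.mul_im, Complex.ofReal_re,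
      Complex.ofReal_im, Complex.zero_im] at this
    linear_combination this
  have hre_eq : z.re ^ 2 - z.im ^ 2 - t * z.re + D = 0 := by
    have := congrArg Complex.re hz
    simp only [sq, Complex.sub_re, Complex.add_re, Complex.mul_re, Complex.ofReal_re,
      Complex.ofReal_im, Complex.zero_re] at this
    linear_combination this
  have htrace : 2 * z.re - t = 0 := (mul_eq_zero.mp him_eq).resolve_left him
  rw [Complex.normSq_apply]
  linear_combination z.re * htrace - hre_eq

lemma Matrix.det_smul_one_sub_map_ofReal_fin_two (A : Matrix (Fin 2) (Fin 2) ℝ) (z : ℂ) :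
    (z • (1 : Matrix (Fin 2) (Fin 2) ℂ) - A.map (fun r : ℝ => (r : ℂ))).det
      = z ^ 2 - (A.trace : ℝ) * z + (A.det : ℝ) := by
  simp only [det_fin_two, Fin.isValue, sub_apply, smul_apply, one_apply_eq, smul_eq_mul, mul_one,
    map_apply, ne_eq, zero_ne_one, not_false_eq_true, one_apply_ne, mul_zero, zero_sub, one_ne_zero,
    mul_neg, neg_mul, neg_neg, trace_fin_two, Complex.ofReal_add, Complex.ofReal_sub,
    Complex.ofReal_mul]
  ring

lemma Matrix.norm_eq_sqrt_det_of_nonreal_root_fin_two (A : Matrix (Fin 2) (Fin 2) ℝ) {z : ℂ}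
    (hz : (z • (1 : Matrix (Fin 2) (Fin 2) ℂ) - A.map (fun r : ℝ => (r : ℂ))).det = 0)
    (him : z.im ≠ 0) : ‖z‖ = Real.sqrt A.det := by
  rw [A.det_smul_one_sub_map_ofReal_fin_two] at hz
  rw [Complex.norm_def, Complex.normSq_eq_of_sq_sub_mul_add_eq_zero hz him]

theorem conformal_symplectic_transition_matrices_spectrum_general
    (lam m h γ : ℝ)
    (μ : ℝ) (hμ : μ = Real.exp (-γ * h))
    (Tcm Trgd : Matrix (Fin 2) (Fin 2) ℝ)
    (hTcm : Tcm = !![1 - h ^ 2 * lam / m, (h / m) * μ; -h * lam, μ])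
    (hTrgd : Trgd = !![1 - h ^ 2 * lam / (2 * m),
        (h / (2 * m)) * Real.sqrt μ * (2 - h ^ 2 * lam / (2 * m));
        -h * lam * Real.sqrt μ, μ * (1 - h ^ 2 * lam / (2 * m))]) :
    Tcm.det = μ
    ∧ Trgd.det = μ
    ∧ Real.sqrt μ = Real.exp (-γ * h / 2)
    ∧ (∀ z : ℂ,
        (z • (1 : Matrix (Fin 2) (Fin 2) ℂ) - Tcm.map (fun r : ℝ => (r : ℂ))).det = 0 →
        z.im ≠ 0 → ‖z‖ = Real.sqrt μ)
    ∧ (∀ z : ℂ,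
        (z • (1 : Matrix (Fin 2) (Fin 2) ℂ) - Trgd.map (fun r : ℝ => (r : ℂ))).det = 0 →
        z.im ≠ 0 → ‖z‖ = Real.sqrt μ) := by
  have hμ_nonneg : 0 ≤ μ := hμ ▸ (Real.exp_pos _).le
  have hdet_cm : Tcm.det = μ := by
    rw [hTcm, Matrix.det_fin_two_of]
    ring
  -- With `k = h²λ/(2m)` the determinant is `μ ((1 - k)² + k (2 - k)) = μ`.
  have hdet_rgd : Trgd.det = μ := by
    rw [hTrgd, Matrix.det_fin_two_of]
    linear_combination h ^ 2 * lam / (2 * m) * (2 - h ^ 2 * lam / (2 * m)) *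
      Real.sq_sqrt hμ_nonneg
  refine ⟨hdet_cm, hdet_rgd, by rw [hμ, ← Real.exp_half], fun z hz him => ?_,
    fun z hz him => ?_⟩
  · rw [← hdet_cm]
    exact Tcm.norm_eq_sqrt_det_of_nonreal_root_fin_two hz him
  · rw [← hdet_rgd]
    exact Trgd.norm_eq_sqrt_det_of_nonreal_root_fin_two hz him

/-- for the quadratic `f(x) = (λ/2)x²`, the heavy-ball and RGD
(`c → ∞`, `α = 1`) transition matrices both have determinant `μ = e^{−γh}`,
so every non-real complex eigenvalue of either matrix has modulus exactly
`√μ = e^{−γh/2}`: both conformal symplectic methods exactly preserve the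
dissipation rate of the continuous system in their linear spectrum. -/
theorem conformal_symplectic_transition_matrices_spectrum
    (lam m h γ : ℝ) (hlam : 0 < lam) (hm : 0 < m) (hh : 0 < h) (hγ : 0 ≤ γ)
    (μ : ℝ) (hμ : μ = Real.exp (-γ * h))
    (Tcm Trgd : Matrix (Fin 2) (Fin 2) ℝ)
    (hTcm : Tcm = !![1 - h ^ 2 * lam / m, (h / m) * μ; -h * lam, μ])
    (hTrgd : Trgd = !![1 - h ^ 2 * lam / (2 * m),
        (h / (2 * m)) * Real.sqrt μ * (2 - h ^ 2 * lam / (2 * m));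
        -h * lam * Real.sqrt μ, μ * (1 - h ^ 2 * lam / (2 * m))]) :
    Tcm.det = μ
    ∧ Trgd.det = μ
    ∧ Real.sqrt μ = Real.exp (-γ * h / 2)
    ∧ (∀ z : ℂ,
        (z • (1 : Matrix (Fin 2) (Fin 2) ℂ) - Tcm.map (fun r : ℝ => (r : ℂ))).det = 0 →
        z.im ≠ 0 → ‖z‖ = Real.sqrt μ)
    ∧ (∀ z : ℂ,
        (z • (1 : Matrix (Fin 2) (Fin 2) ℂ) - Trgd.map (fun r : ℝ => (r : ℂ))).det = 0 →
        z.im ≠ 0 → ‖z‖ = Real.sqrt μ) :=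
  conformal_symplectic_transition_matrices_spectrum_general lam m h γ μ hμ Tcm Trgd hTcm hTrgd
end
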